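/- Let γ_A, γ_B ∈ (0,1). For integer x ≥ 1, define α_x := (1−γ_A)^{x−1} and p*(x,y) := α_x C(x,y)(1/2)^x + (1−α_x) C(x−2,y−1)(1/2)^{x−2} (with C(n,k)=0 when k<0 or k>n). Then Σ_{y=0}^x p*(x,y) (1/2)^y (1−γ_B)^{y−1} = (8/(3−γ_B)²) · ((3−γ_B)/4)^x + ((1+γ_B)²/((1−γ_A)(1−γ_B)(3−γ_B)²)) · ((3−γ_B)(1−γ_A)/4)^x. -/

import Mathlib

/-- The surrogate distribution `p*(x,y)` with the convention `C(n,k) = 0` for `k < 0`. -/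
noncomputable def pstar (γA : ℝ) (x y : ℕ) : ℝ :=
  (1 - γA) ^ (x - 1) * (x.choose y : ℝ) * (1 / 2 : ℝ) ^ x +
    (1 - (1 - γA) ^ (x - 1)) *
      (if y = 0 then 0 else ((x - 2).choose (y - 1) : ℝ)) * (1 / 2 : ℝ) ^ (x - 2)

/-!
Write `a = 1 - γA`, `b = 1 - γB`. The law `p*(x,·)` mixes `Bin(x, 1/2)` and `1 + Bin(x - 2, 1/2)`
with weights `a^(x-1)` and `1 - a^(x-1)`, so the sum mixes two binomial generating functions
evaluated at `b / 2`: they give `b⁻¹ ((b + 2)/4)^x` and `8 / (b + 2)^2 · ((b + 2)/4)^x`.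
Collecting the terms in `a^(x-1)` and using `(b + 2)^2 - 8b = (2 - b)^2` yields the closed form.
-/

open Finset

lemma sum_pstar_mul (γA : ℝ) (x : ℕ) (w : ℕ → ℝ) :
    ∑ y ∈ range (x + 1), pstar γA x y * w y =
      (1 - γA) ^ (x - 1) * (1 / 2) ^ x * ∑ y ∈ range (x + 1), (x.choose y : ℝ) * w y +
        (1 - (1 - γA) ^ (x - 1)) * (1 / 2) ^ (x - 2) *
          ∑ y ∈ range (x + 1), (if y = 0 then 0 else ((x - 2).choose (y - 1) : ℝ)) * w y := by
  simp only [pstar, add_mul, sum_add_distrib, mul_sum]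
  congr 1 <;> refine sum_congr rfl fun y _ => by ring

lemma sum_choose_mul_pow_mul_zpow_sub_one (n : ℕ) (t : ℝ) {b : ℝ} (hb : b ≠ 0) :
    ∑ y ∈ range (n + 1), (n.choose y : ℝ) * (t ^ y * b ^ ((y : ℤ) - 1)) = b⁻¹ * (t * b + 1) ^ n := by
  rw [add_pow, mul_sum]
  refine sum_congr rfl fun y _ => ?_
  rw [zpow_sub_one₀ hb, zpow_natCast]
  ring

lemma sum_choose_pred_mul_pow_mul_zpow_sub_one (n : ℕ) (t b : ℝ) :
    ∑ y ∈ range (n + 3), (if y = 0 then 0 else (n.choose (y - 1) : ℝ)) *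
      (t ^ y * b ^ ((y : ℤ) - 1)) = t * (t * b + 1) ^ n := by
  rw [sum_range_succ', sum_range_succ, add_pow, mul_sum]
  simp only [↓reduceIte, Nat.succ_ne_zero, Nat.add_sub_cancel, Nat.choose_succ_self,
    Nat.cast_zero, zero_mul, add_zero]
  refine sum_congr rfl fun y _ => ?_
  push_cast
  rw [add_sub_cancel_right, zpow_natCast]
  ring

theorem stmt_8 (γA γB : ℝ) (hA1 : γA < 1) (hB1 : γB < 1)
    (x : ℕ) (hx : 1 ≤ x) :
    ∑ y ∈ Finset.range (x + 1),
      pstar γA x y * (1 / 2 : ℝ) ^ y * (1 - γB) ^ ((y : ℤ) - 1)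
    = (8 / (3 - γB) ^ 2) * ((3 - γB) / 4) ^ x +
      ((1 + γB) ^ 2 / ((1 - γA) * (1 - γB) * (3 - γB) ^ 2)) *
        ((3 - γB) * (1 - γA) / 4) ^ x := by
  have ha : 1 - γA ≠ 0 := by linarith
  have hb : 1 - γB ≠ 0 := by linarith
  have hc : 3 - γB ≠ 0 := by linarith
  simp only [mul_assoc (pstar _ _ _), sum_pstar_mul,
    sum_choose_mul_pow_mul_zpow_sub_one x _ hb]
  obtain rfl | ⟨n, rfl⟩ : x = 1 ∨ ∃ n, x = n + 2 := by
    rcases x with _ | _ | n <;> simp_all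
  -- for `x = 1` the junk value `x - 2 = 0` is harmless: its weight `1 - a^0` vanishes
  · norm_num
    field_simp
    ring
  · rw [Nat.add_sub_cancel, show n + 2 - 1 = n + 1 by omega,
      sum_choose_pred_mul_pow_mul_zpow_sub_one, show 1 / 2 * (1 - γB) + 1 = (3 - γB) / 2 by ring,
      show (4 : ℝ) = 2 * 2 by norm_num]
    simp only [div_pow, mul_pow, one_pow]
    field_simp
    ring
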